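/- arXiv:1604.08012 — 4 statements merged into one kernel-verified Lean document; each statement's English description precedes it below -/
import Mathlib

section
/- If B is a right stochastic matrix with all entries strictly positive, then there is a unique probability vector a with a·B = a, and this a has all components strictly positive. -/
open Matrix Finset

/-- vecMul preserves the total sum for a row-stochastic matrix. -/
lemma sum_vecMul_stochastic {m : ℕ} (B : Matrix (Fin m) (Fin m) ℝ)
    (hrow : ∀ i, ∑ j, B i j = 1) (v : Fin m → ℝ) :
    ∑ j, Matrix.vecMul v B j = ∑ i, v i := by
  simp only [Matrix.vecMul, dotProduct]
  rw [Finset.sum_comm]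
  simp [← Finset.mul_sum, hrow]

/-- If all entries of `B` are at least `c > 0`, any zero-sum fixed vector of
`vecMul · B` is zero. -/
lemma zero_sum_fixed_eq_zero {m : ℕ} (hm : 1 ≤ m) {c : ℝ} (hc : 0 < c)
    (B : Matrix (Fin m) (Fin m) ℝ) (hcB : ∀ i j, c ≤ B i j)
    (hrow : ∀ i, ∑ j, B i j = 1)
    (v : Fin m → ℝ) (hsum : ∑ i, v i = 0) (hfix : Matrix.vecMul v B = v) :
    v = 0 := by
  have key : ∀ j, |v j| ≤ ∑ i, |v i| * (B i j - c) := by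
    intro j
    have h1 : v j = ∑ i, v i * (B i j - c) := by
      have := congrFun hfix j
      simp only [Matrix.vecMul, dotProduct] at this
      calc v j = ∑ i, v i * B i j := this.symm
        _ = ∑ i, v i * (B i j - c) := by
            simp [mul_sub, Finset.sum_sub_distrib, ← Finset.sum_mul, hsum]
    rw [h1]
    calc |∑ i, v i * (B i j - c)| ≤ ∑ i, |v i * (B i j - c)| :=
          Finset.abs_sum_le_sum_abs _ _
      _ = ∑ i, |v i| * (B i j - c) := by
          refine Finset.sum_congr rfl fun i _ => ?_
          rw [abs_mul, abs_of_nonneg (a := B i j - c) (by linarith [hcB i j])]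
  have h2 : ∑ j, |v j| ≤ (1 - m * c) * ∑ i, |v i| := by
    calc ∑ j, |v j| ≤ ∑ j, ∑ i, |v i| * (B i j - c) :=
          Finset.sum_le_sum fun j _ => key j
      _ = ∑ i, |v i| * ((∑ j, B i j) - m * c) := by
          rw [Finset.sum_comm]
          refine Finset.sum_congr rfl fun i _ => ?_
          rw [← Finset.mul_sum]
          congr 1
          rw [Finset.sum_sub_distrib]
          simp [mul_comm]
      _ = (1 - m * c) * ∑ i, |v i| := by
          rw [Finset.mul_sum]
          refine Finset.sum_congr rfl fun i _ => ?_
          rw [hrow i]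
          ring
  have hS : 0 ≤ ∑ i, |v i| := Finset.sum_nonneg fun i _ => abs_nonneg _
  have hm' : (0 : ℝ) < m := by exact_mod_cast (hm : 0 < m)
  have hmc : 0 < (m : ℝ) * c := mul_pos hm' hc
  have hS0 : ∑ i, |v i| = 0 := by nlinarith
  funext i
  have := (Finset.sum_eq_zero_iff_of_nonneg (fun i _ => abs_nonneg (v i))).mp hS0
    i (Finset.mem_univ i)
  simpa [abs_eq_zero] using this

/-- If `B` is a right stochastic matrix with all entries strictly positive,
then there is a unique probability vector `a` with `a·B = a`, and this `a` has all
components strictly positive. -/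
theorem positive_stochastic_unique_invariant_vector (m : ℕ) (hm : 1 ≤ m)
    (B : Matrix (Fin m) (Fin m) ℝ)
    (hpos : ∀ i j, 0 < B i j) (hrow : ∀ i, ∑ j, B i j = 1) :
    ∃ a : Fin m → ℝ,
      ((∀ i, 0 < a i) ∧ (∑ i, a i = 1) ∧ Matrix.vecMul a B = a) ∧
      (∀ a' : Fin m → ℝ,
        ((∀ i, 0 ≤ a' i) ∧ (∑ i, a' i = 1) ∧ Matrix.vecMul a' B = a') → a' = a) := by
  haveI : NeZero m := ⟨by omega⟩
  -- minimum entry c > 0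
  obtain ⟨p, hp⟩ := Finite.exists_min (fun q : Fin m × Fin m => B q.1 q.2)
  set c : ℝ := B p.1 p.2 with hcdef
  have hc : 0 < c := hpos _ _
  have hcB : ∀ i j, c ≤ B i j := fun i j => hp (i, j)
  -- det (B - 1) = 0
  have hones : (B - 1) *ᵥ (fun _ => (1 : ℝ)) = 0 := by
    funext i
    simp [Matrix.mulVec, dotProduct, Matrix.sub_apply, Matrix.one_apply,
      Finset.sum_sub_distrib, hrow]
  have hdet : (B - 1).det = 0 := by
    rw [← Matrix.exists_mulVec_eq_zero_iff]
    exact ⟨fun _ => 1, by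
      intro h
      exact one_ne_zero (congrFun h ⟨0, hm⟩), hones⟩
  have hdetT : (Bᵀ - 1).det = 0 := by
    have : Bᵀ - 1 = (B - 1)ᵀ := by rw [Matrix.transpose_sub, Matrix.transpose_one]
    rw [this, Matrix.det_transpose]; exact hdet
  obtain ⟨w, hw0, hw⟩ := Matrix.exists_mulVec_eq_zero_iff.mpr hdetT
  have hwfix : Matrix.vecMul w B = w := by
    rw [← Matrix.mulVec_transpose]
    have := hw
    rw [Matrix.sub_mulVec, Matrix.one_mulVec, sub_eq_zero] at this
    exact this
  -- the absolute-value vector is also fixed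
  set u : Fin m → ℝ := fun i => |w i| with hudef
  have hunn : ∀ i, 0 ≤ u i := fun i => abs_nonneg _
  have hle : ∀ j, u j ≤ Matrix.vecMul u B j := by
    intro j
    have h1 : w j = ∑ i, w i * B i j := (congrFun hwfix j).symm
    have h2 : Matrix.vecMul u B j = ∑ i, |w i| * B i j := rfl
    rw [h2, hudef]
    calc |w j| = |∑ i, w i * B i j| := by rw [← h1]
      _ ≤ ∑ i, |w i * B i j| := Finset.abs_sum_le_sum_abs _ _
      _ = ∑ i, |w i| * B i j := by
          refine Finset.sum_congr rfl fun i _ => ?_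
          rw [abs_mul, abs_of_nonneg (le_of_lt (hpos i j))]
  have hsum_eq : ∑ j, Matrix.vecMul u B j = ∑ j, u j :=
    sum_vecMul_stochastic B hrow u
  have hufix : Matrix.vecMul u B = u := by
    have hz : ∑ j, (Matrix.vecMul u B j - u j) = 0 := by
      rw [Finset.sum_sub_distrib, hsum_eq, sub_self]
    have := (Finset.sum_eq_zero_iff_of_nonneg
      (fun j _ => sub_nonneg.mpr (hle j))).mp hz
    funext j
    have hj := this j (Finset.mem_univ j)
    linarith [sub_eq_zero.mp hj]
  -- normalize
  have hS : 0 < ∑ i, u i := by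
    obtain ⟨i, hi⟩ := Function.ne_iff.mp hw0
    exact Finset.sum_pos' (fun i _ => hunn i)
      ⟨i, Finset.mem_univ i, abs_pos.mpr hi⟩
  set S : ℝ := ∑ i, u i with hSdef
  set a : Fin m → ℝ := fun i => S⁻¹ * u i with hadef
  have hann : ∀ i, 0 ≤ a i := fun i => mul_nonneg (inv_nonneg.mpr hS.le) (hunn i)
  have hasum : ∑ i, a i = 1 := by
    rw [hadef]
    simp only
    rw [← Finset.mul_sum, ← hSdef, inv_mul_cancel₀ hS.ne']
  have hafix : Matrix.vecMul a B = a := by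
    funext j
    have : Matrix.vecMul a B j = S⁻¹ * Matrix.vecMul u B j := by
      simp only [Matrix.vecMul, dotProduct, hadef, Finset.mul_sum, mul_assoc]
    rw [this, hufix]
  have hapos : ∀ j, 0 < a j := by
    intro j
    have h1 : a j = ∑ i, a i * B i j := (congrFun hafix j).symm
    have h2 : ∑ i, a i * c ≤ ∑ i, a i * B i j :=
      Finset.sum_le_sum fun i _ => mul_le_mul_of_nonneg_left (hcB i j) (hann i)
    have h3 : ∑ i, a i * c = c := by rw [← Finset.sum_mul, hasum, one_mul]
    rw [h1]
    calc (0 : ℝ) < c := hc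
      _ = ∑ i, a i * c := h3.symm
      _ ≤ ∑ i, a i * B i j := h2
  refine ⟨a, ⟨hapos, hasum, hafix⟩, ?_⟩
  rintro a' ⟨-, ha'sum, ha'fix⟩
  have hd : a' - a = 0 := by
    apply zero_sum_fixed_eq_zero hm hc B hcB hrow
    · simp only [Pi.sub_apply]
      rw [Finset.sum_sub_distrib, ha'sum, hasum, sub_self]
    · rw [Matrix.sub_vecMul, ha'fix, hafix]
  exact sub_eq_zero.mp hd
end

section
/- Let A be an m×m matrix with nonpositive off-diagonal entries, rows summing to 0, and irreducible (for every nonempty proper subset W of indices there exist i ∈ W and j ∉ W with a_{ij} < 0). Then for every t > 0 all entries of e^{-At} are strictly positive. -/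
/-!
For large `c`, `M = c • 1 - t • A` is entrywise nonnegative with the same off-diagonal
pattern as `-t • A`, and `e^{-tA} = e^{-c} e^{M}`. The cut condition makes the graph of positive
entries of `M` strongly connected: each entry `(i, j)` is positive in some power `M ^ k`, hence
in `e^M = ∑ M ^ k / k!`, a series of nonnegative matrices.
-/

open NormedSpace Finset

namespace Matrix

variable {n : Type*} [Fintype n]

/-- Unlike `Matrix.IsIrreducible`, this neither assumes nonnegativity nor asks for a cycle
through each index. -/
def CutIrreducible {R : Type*} [Zero R] [LT R] (M : Matrix n n R) : Prop :=
  ∀ W : Finset n, W.Nonempty → W ≠ univ → ∃ i ∈ W, ∃ j ∉ W, 0 < M i j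

theorem CutIrreducible.mono_offDiag {R : Type*} [Zero R] [Preorder R] {M N : Matrix n n R}
    (hM : M.CutIrreducible) (hMN : ∀ i j, i ≠ j → M i j ≤ N i j) : N.CutIrreducible := by
  intro W hW hWu
  obtain ⟨i, hi, j, hj, hij⟩ := hM W hW hWu
  exact ⟨i, hi, j, hj, hij.trans_le (hMN i j (ne_of_mem_of_not_mem hi hj))⟩

/-- The indices reachable from `i` form a set with no positive entry leaving it, so by the cut
condition they exhaust all indices. -/
theorem CutIrreducible.exists_pow_apply_pos [DecidableEq n] {R : Type*} [Semiring R]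
    [PartialOrder R] [IsStrictOrderedRing R] {M : Matrix n n R} (hM : M.CutIrreducible)
    (hM₀ : ∀ i j, 0 ≤ M i j) (i j : n) : ∃ k, 0 < (M ^ k) i j := by
  classical
  by_contra! hj
  set W := univ.filter fun b => ∃ k, 0 < (M ^ k) i b
  have hiW : i ∈ W := mem_filter.mpr ⟨mem_univ _, 0, by simp⟩
  have hjW : j ∉ W := fun h => by
    obtain ⟨k, hk⟩ := (mem_filter.mp h).2
    exact hj k hk
  obtain ⟨a, haW, b, hbW, hab⟩ := hM W ⟨i, hiW⟩ fun h => hjW (h ▸ mem_univ j)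
  obtain ⟨k, hk⟩ := (mem_filter.mp haW).2
  have hb : 0 < (M ^ (k + 1)) i b := by
    rw [pow_succ, mul_apply]
    exact sum_pos' (fun x _ => mul_nonneg (pow_apply_nonneg hM₀ k i x) (hM₀ x b))
      ⟨a, mem_univ a, mul_pos hk hab⟩
  exact hbW (mem_filter.mpr ⟨mem_univ _, k + 1, hb⟩)
variable [DecidableEq n]

theorem exp_add_smul_one (B : Matrix n n ℝ) (c : ℝ) : exp (B + c • 1) = Real.exp c • exp B := by
  rw [exp_add_of_commute _ _ ((Commute.one_right B).smul_right c), smul_one_eq_diagonal,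
    exp_diagonal, Pi.exp_def, ← Real.exp_eq_exp_ℝ, ← smul_one_eq_diagonal, Matrix.mul_smul,
    mul_one]

theorem exp_apply_pos_of_pow_apply_pos {M : Matrix n n ℝ} (hM₀ : ∀ i j, 0 ≤ M i j) {i j : n}
    {k : ℕ} (hk : 0 < (M ^ k) i j) : 0 < exp M i j := by
  have hsum := Pi.hasSum.mp (Pi.hasSum.mp
    (open scoped Norms.Operator in exp_series_hasSum_exp' (𝕂 := ℝ) M) i) j
  refine hasSum_lt (f := 0) (i := k) (fun n => ?_) ?_ hasSum_zero hsum
  · exact mul_nonneg (by positivity) (pow_apply_nonneg hM₀ n i j)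
  · exact mul_pos (by positivity) hk

theorem exp_apply_pos_of_offDiag_nonneg {B : Matrix n n ℝ} (hB : ∀ i j, i ≠ j → 0 ≤ B i j)
    (hirr : B.CutIrreducible) (i j : n) : 0 < exp B i j := by
  set c := ∑ k, |B k k|
  set M := B + c • 1
  have hM₀ : ∀ a b, 0 ≤ M a b := by
    intro a b
    rcases eq_or_ne a b with rfl | hab
    · have : |B a a| ≤ c :=
        single_le_sum (f := fun k => |B k k|) (fun k _ => abs_nonneg _) (mem_univ a)
      simp only [M, add_apply, smul_apply, one_apply_eq, smul_eq_mul, mul_one]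
      linarith [neg_abs_le (B a a)]
    · simpa [M, one_apply_ne hab] using hB a b hab
  have hMirr : M.CutIrreducible := hirr.mono_offDiag fun a b hab => by simp [M, one_apply_ne hab]
  obtain ⟨k, hk⟩ := hMirr.exists_pow_apply_pos hM₀ i j
  have hB_eq : B = M + (-c) • 1 := by simp [M]
  rw [hB_eq, exp_add_smul_one, smul_apply, smul_eq_mul]
  exact mul_pos (Real.exp_pos _) (exp_apply_pos_of_pow_apply_pos hM₀ hk)

end Matrix

theorem exp_neg_smul_positive_of_irreducible_general (m : ℕ) (A : Matrix (Fin m) (Fin m) ℝ)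
    (hA1 : ∀ i j, i ≠ j → A i j ≤ 0)
    (hA3 : ∀ W : Finset (Fin m), W.Nonempty → W ≠ Finset.univ →
      ∃ i ∈ W, ∃ j ∉ W, A i j < 0) :
    ∀ t : ℝ, 0 < t → ∀ i j, 0 < NormedSpace.exp (-(t • A)) i j := by
  intro t ht
  refine Matrix.exp_apply_pos_of_offDiag_nonneg (fun i j hij => ?_) fun W hW hWu => ?_
  · simpa using mul_nonpos_of_nonneg_of_nonpos ht.le (hA1 i j hij)
  · obtain ⟨i, hi, j, hj, hij⟩ := hA3 W hW hWu
    exact ⟨i, hi, j, hj, by simpa using mul_neg_of_pos_of_neg ht hij⟩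

/-- If `A` has nonpositive off-diagonal entries, rows summing to `0`, and is
irreducible (for every nonempty proper subset `W` of indices there exist `i ∈ W` and
`j ∉ W` with `A i j < 0`), then for every `t > 0` all entries of `e^{-At}` are strictly
positive. -/
theorem exp_neg_smul_positive_of_irreducible (m : ℕ) (A : Matrix (Fin m) (Fin m) ℝ)
    (hA1 : ∀ i j, i ≠ j → A i j ≤ 0) (hA2 : ∀ i, ∑ j, A i j = 0)
    (hA3 : ∀ W : Finset (Fin m), W.Nonempty → W ≠ Finset.univ →
      ∃ i ∈ W, ∃ j ∉ W, A i j < 0) :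
    ∀ t : ℝ, 0 < t → ∀ i j, 0 < NormedSpace.exp (-(t • A)) i j :=
  exp_neg_smul_positive_of_irreducible_general m A hA1 hA3
end

section
/- Let τ be a simple stopping time of the form τ = Σ_k t_k·1_{E_k} with E_k ∈ F_{t_k} pairwise disjoint covering D, and let σ be another simple stopping time of the form σ = Σ_l s_l·1_{F_l} with F_l ∈ F_{s_l}. Define ρ(ω) = σ(ω) + τ(φ_σ(ω)), where φ_σ(ω)(s) = ω(s + σ(ω)). Then ρ is a simple stopping time. -/
open scoped NNReal
open Set Filter MeasureTheory

/-- A path `ω : [0,∞) → {1,…,m}` is càdlàg: right-continuous with left limits. -/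
def Cadlag {m : ℕ} (ω : ℝ≥0 → Fin m) : Prop :=
  (∀ t : ℝ≥0, ContinuousWithinAt ω (Set.Ici t) t) ∧
  (∀ t : ℝ≥0, 0 < t → ∃ l : Fin m, Filter.Tendsto ω (nhdsWithin t (Set.Iio t)) (nhds l))

/-- The space `D` of càdlàg paths from `[0,∞)` to `{1,…,m}`. -/
def PathSpace (m : ℕ) : Type := {ω : ℝ≥0 → Fin m // Cadlag ω}

/-- The filtration `F_t` on `D` generated by the cylinder sets
`{ω | ω s = i}` with `s ≤ t`. -/
def cylSA (m : ℕ) (t : ℝ≥0) : MeasurableSpace (PathSpace m) :=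
  MeasurableSpace.generateFrom
    {S | ∃ s : ℝ≥0, s ≤ t ∧ ∃ i : Fin m, S = {ω : PathSpace m | ω.1 s = i}}

lemma Cadlag.shift {m : ℕ} {ω : ℝ≥0 → Fin m} (hω : Cadlag ω) (h : ℝ≥0) :
    Cadlag (fun s => ω (s + h)) := by
  constructor
  · intro t
    have hf : ContinuousWithinAt (fun s : ℝ≥0 => s + h) (Set.Ici t) t :=
      (continuous_id.add continuous_const).continuousWithinAt
    exact ContinuousWithinAt.comp (f := fun s : ℝ≥0 => s + h) (x := t)
      (s := Set.Ici t) (t := Set.Ici (t + h)) (hω.1 (t + h)) hf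
      (fun s hs => (add_le_add (show t ≤ s from hs) le_rfl : t + h ≤ s + h))
  · intro t ht
    obtain ⟨l, hl⟩ := hω.2 (t + h) (lt_of_lt_of_le ht le_self_add)
    refine ⟨l, hl.comp ?_⟩
    rw [tendsto_nhdsWithin_iff]
    constructor
    · exact ((continuous_id.add continuous_const).tendsto t).mono_left nhdsWithin_le_nhds
    · exact eventually_mem_nhdsWithin.mono fun x hx => (add_lt_add_of_lt_of_le (show x < t from hx) le_rfl : x + h < t + h)

/-- The shift flow `φ_h` on `D`: `φ_h(ω)(s) = ω(s + h)`. -/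
def pshift {m : ℕ} (h : ℝ≥0) (ω : PathSpace m) : PathSpace m :=
  ⟨fun s => ω.1 (s + h), ω.2.shift h⟩

lemma cylSA_mono (m : ℕ) : Monotone (cylSA m) := fun _ _ hst =>
  MeasurableSpace.generateFrom_mono fun _ ⟨u, hu, i, hS⟩ => ⟨u, hu.trans hst, i, hS⟩

lemma measurable_pshift (m : ℕ) (t h : ℝ≥0) :
    Measurable[cylSA m (t + h), cylSA m t] (pshift h) := by
  refine @measurable_generateFrom _ _ (cylSA m (t + h)) _ _ ?_
  rintro _ ⟨s, hs, i, rfl⟩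
  exact MeasurableSpace.measurableSet_generateFrom ⟨s + h, add_le_add_left hs h, i, rfl⟩

section SimpleStoppingTime

variable {Ω ι : Type*} {ℱ : ℝ≥0 → MeasurableSpace Ω} {c : ι → ℝ≥0} {A : ι → Set Ω}
  {ρ : Ω → ℝ≥0}

lemma finite_range_of_iUnion_eq_univ [Finite ι] (hcover : ⋃ i, A i = univ)
    (hρ : ∀ i, ∀ ω ∈ A i, ρ ω = c i) : (range ρ).Finite := by
  refine (finite_range c).subset ?_
  rintro _ ⟨ω, rfl⟩
  obtain ⟨i, hi⟩ := mem_iUnion.1 (hcover ▸ mem_univ ω)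
  exact ⟨i, (hρ i ω hi).symm⟩

lemma setOf_le_eq_biUnion (hcover : ⋃ i, A i = univ) (hρ : ∀ i, ∀ ω ∈ A i, ρ ω = c i)
    (t : ℝ≥0) : {ω | ρ ω ≤ t} = ⋃ i ∈ {i | c i ≤ t}, A i := by
  ext ω
  simp only [mem_iUnion, exists_prop]
  constructor
  · intro hle
    obtain ⟨i, hi⟩ := mem_iUnion.1 (hcover ▸ mem_univ ω)
    exact ⟨i, (hρ i ω hi ▸ hle : c i ≤ t), hi⟩
  · rintro ⟨i, hle, hi⟩
    exact (hρ i ω hi ▸ hle : ρ ω ≤ t)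

lemma simpleStoppingTime_of_iUnion_eq_univ [Finite ι] (hℱ : Monotone ℱ)
    (hA : ∀ i, MeasurableSet[ℱ (c i)] (A i)) (hcover : ⋃ i, A i = univ)
    (hρ : ∀ i, ∀ ω ∈ A i, ρ ω = c i) :
    (range ρ).Finite ∧ ∀ t, MeasurableSet[ℱ t] {ω | ρ ω ≤ t} := by
  refine ⟨finite_range_of_iUnion_eq_univ hcover hρ, fun t => ?_⟩
  rw [setOf_le_eq_biUnion hcover hρ t]
  exact MeasurableSet.biUnion (to_countable _) fun i hi => hℱ hi _ (hA i)

end SimpleStoppingTime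

theorem composed_simple_stopping_time_general (m : ℕ) {ι κ : Type} [Fintype ι] [Fintype κ]
    (tt : ι → ℝ≥0) (E : ι → Set (PathSpace m))
    (ss : κ → ℝ≥0) (F : κ → Set (PathSpace m))
    (hE : ∀ k, MeasurableSet[cylSA m (tt k)] (E k))
    (hEcover : (⋃ k, E k) = Set.univ)
    (hF : ∀ l, MeasurableSet[cylSA m (ss l)] (F l))
    (hFcover : (⋃ l, F l) = Set.univ)
    (τ σ : PathSpace m → ℝ≥0)
    (hτ : ∀ k, ∀ ω ∈ E k, τ ω = tt k)
    (hσ : ∀ l, ∀ ω ∈ F l, σ ω = ss l)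
    (ρ : PathSpace m → ℝ≥0)
    (hρ : ∀ ω, ρ ω = σ ω + τ (pshift (σ ω) ω)) :
    (Set.range ρ).Finite ∧ ∀ t : ℝ≥0, MeasurableSet[cylSA m t] {ω | ρ ω ≤ t} := by
  -- `ρ = s_l + t_k` on the piece `F_l ∩ φ_{s_l}⁻¹(E_k)`, which lies in `F_{s_l + t_k}`.
  refine simpleStoppingTime_of_iUnion_eq_univ (cylSA_mono m)
    (c := fun p : κ × ι => ss p.1 + tt p.2) (A := fun p => F p.1 ∩ pshift (ss p.1) ⁻¹' E p.2)
    (fun ⟨l, k⟩ => ?_) ?_ fun ⟨l, k⟩ ω ⟨hl, hk⟩ => ?_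
  · refine MeasurableSet.inter (cylSA_mono m le_self_add _ (hF l)) ?_
    rw [add_comm]
    exact measurable_pshift m (tt k) (ss l) (hE k)
  · refine eq_univ_of_forall fun ω => ?_
    obtain ⟨l, hl⟩ := mem_iUnion.1 (hFcover ▸ mem_univ ω)
    obtain ⟨k, hk⟩ := mem_iUnion.1 (hEcover ▸ mem_univ (pshift (ss l) ω))
    exact mem_iUnion.2 ⟨(l, k), hl, hk⟩
  · rw [hρ, hσ l ω hl, hτ k _ hk]

/-- If `τ = Σ_k t_k·1_{E_k}` with `E_k ∈ F_{t_k}` pairwise disjoint covering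
`D` and `σ = Σ_l s_l·1_{F_l}` with `F_l ∈ F_{s_l}` pairwise disjoint covering `D` are
simple stopping times, then `ρ(ω) = σ(ω) + τ(φ_{σ(ω)}(ω))` is a simple stopping time. -/
theorem composed_simple_stopping_time (m : ℕ) {ι κ : Type} [Fintype ι] [Fintype κ]
    (tt : ι → ℝ≥0) (E : ι → Set (PathSpace m))
    (ss : κ → ℝ≥0) (F : κ → Set (PathSpace m))
    (hE : ∀ k, MeasurableSet[cylSA m (tt k)] (E k))
    (hEdisj : Pairwise (Function.onFun Disjoint E))
    (hEcover : (⋃ k, E k) = Set.univ)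
    (hF : ∀ l, MeasurableSet[cylSA m (ss l)] (F l))
    (hFdisj : Pairwise (Function.onFun Disjoint F))
    (hFcover : (⋃ l, F l) = Set.univ)
    (τ σ : PathSpace m → ℝ≥0)
    (hτ : ∀ k, ∀ ω ∈ E k, τ ω = tt k)
    (hσ : ∀ l, ∀ ω ∈ F l, σ ω = ss l)
    (ρ : PathSpace m → ℝ≥0)
    (hρ : ∀ ω, ρ ω = σ ω + τ (pshift (σ ω) ω)) :
    (Set.range ρ).Finite ∧ ∀ t : ℝ≥0, MeasurableSet[cylSA m t] {ω | ρ ω ≤ t} :=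
  composed_simple_stopping_time_general m tt E ss F hE hEcover hF hFcover τ σ hτ hσ ρ hρ
end

section
/- Let F_β(y) ⊆ ℝ^m be a nonempty closed convex set which is invariant under translations by λ·𝟙 (λ ∈ ℝ, 𝟙 the all-ones vector), and let G ⊆ F_β(y) be a convex subset, dense in F_β(y), invariant under translation by λ·𝟙, and such that for some ν₀ > 0, b ∈ G implies b + ν e_i ∈ G for all i = 1,…,m and 0 < ν < ν₀. Then G is open and equals the interior of F_β(y). -/
/-!
The translations `b ↦ b + λ𝟙` and the small steps `b ↦ b + ν eᵢ` together reach every point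
near `b`: if `‖x - b‖∞ < ν₀/2`, then `x - (b - (ν₀/2)𝟙)` has all coordinates in `(0, ν₀)`, so
`x` is reached from `b - (ν₀/2)𝟙` by one step along each `eᵢ`. Hence `G` is open. An open convex
set has the same interior as its closure, and `closure G ⊇ F`, so `interior F ⊆ G`.
-/

section StepClosed

variable {ι : Type*} [Fintype ι] [DecidableEq ι]

theorem add_mem_of_forall_add_single_mem {S : Set (ι → ℝ)} {ν₀ : ℝ}
    (hS : ∀ b ∈ S, ∀ i, ∀ ν : ℝ, 0 < ν → ν < ν₀ → b + ν • (Pi.single i 1 : ι → ℝ) ∈ S)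
    {b : ι → ℝ} (hb : b ∈ S) {w : ι → ℝ} (hw_nonneg : 0 ≤ w) (hw_lt : ∀ i, w i < ν₀) :
    b + w ∈ S := by
  suffices ∀ s : Finset ι, b + ∑ i ∈ s, w i • (Pi.single i 1 : ι → ℝ) ∈ S by
    convert this Finset.univ
    ext j
    simp [Pi.single_apply]
  intro s
  induction s using Finset.induction_on with
  | empty => simpa using hb
  | insert i s hi ih =>
    rw [Finset.sum_insert hi]
    rcases (hw_nonneg i).eq_or_lt with hwi | hwi
    · simpa [← hwi] using ih
    · convert hS _ ih i (w i) hwi (hw_lt i) using 1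
      abel

theorem isOpen_of_forall_add_single_mem_of_forall_add_const_mem {S : Set (ι → ℝ)} {ν₀ : ℝ}
    (hν₀ : 0 < ν₀)
    (hS : ∀ b ∈ S, ∀ i, ∀ ν : ℝ, 0 < ν → ν < ν₀ → b + ν • (Pi.single i 1 : ι → ℝ) ∈ S)
    (hS_const : ∀ b ∈ S, ∀ lam : ℝ, b + lam • ((fun _ => 1) : ι → ℝ) ∈ S) :
    IsOpen S := by
  refine Metric.isOpen_iff.2 fun b hb ↦ ⟨ν₀ / 2, half_pos hν₀, fun x hx ↦ ?_⟩
  have hw : ∀ i, 0 ≤ x i - b i + ν₀ / 2 ∧ x i - b i + ν₀ / 2 < ν₀ := fun i ↦ by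
    have := abs_lt.1 ((dist_le_pi_dist x b i).trans_lt (Metric.mem_ball.1 hx))
    constructor <;> linarith
  have h := add_mem_of_forall_add_single_mem hS (hS_const b hb (-(ν₀ / 2)))
    (w := fun i ↦ x i - b i + ν₀ / 2) (fun i ↦ (hw i).1) (fun i ↦ (hw i).2)
  convert h using 1
  ext i
  simp only [Pi.add_apply, Pi.smul_apply, smul_eq_mul, mul_one]
  ring

end StepClosed

theorem Convex.eq_interior_of_isOpen_of_subset_closure {E : Type*} [AddCommGroup E]
    [Module ℝ E] [TopologicalSpace E] [IsTopologicalAddGroup E] [ContinuousSMul ℝ E]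
    {G F : Set E} (hG : Convex ℝ G) (hG_open : IsOpen G) (hGF : G ⊆ F) (hFG : F ⊆ closure G) :
    G = interior F := by
  refine subset_antisymm (interior_maximal hGF hG_open) ?_
  rcases G.eq_empty_or_nonempty with rfl | hG_ne
  · simpa using interior_subset.trans hFG
  calc interior F ⊆ interior (closure G) := interior_mono hFG
    _ = G := by
      rw [hG.interior_closure_eq_interior_of_nonempty_interior (by rwa [hG_open.interior_eq]),
        hG_open.interior_eq]

theorem dense_convex_subset_eq_interior_general (m : ℕ)
    (F G : Set (Fin m → ℝ))
    (hGF : G ⊆ F) (hGconv : Convex ℝ G)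
    (hGdense : F ⊆ closure G)
    (hGones : ∀ b ∈ G, ∀ lam : ℝ, b + lam • ((fun _ => 1) : Fin m → ℝ) ∈ G)
    (hν : ∃ ν₀ > (0 : ℝ), ∀ b ∈ G, ∀ i : Fin m, ∀ ν : ℝ, 0 < ν → ν < ν₀ →
      b + ν • (Pi.single i 1 : Fin m → ℝ) ∈ G) :
    IsOpen G ∧ G = interior F := by
  obtain ⟨ν₀, hν₀, hstep⟩ := hν
  have hG_open : IsOpen G :=
    isOpen_of_forall_add_single_mem_of_forall_add_const_mem hν₀ hstep hGones
  exact ⟨hG_open, hGconv.eq_interior_of_isOpen_of_subset_closure hG_open hGF hGdense⟩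

/-- Let `F ⊆ ℝ^m` be a nonempty closed convex set invariant under
translations by multiples of the all-ones vector `𝟙`, and let `G ⊆ F` be convex, dense in
`F`, invariant under translations by multiples of `𝟙`, and such that for some `ν₀ > 0`,
`b ∈ G` implies `b + ν eᵢ ∈ G` for every standard basis vector `eᵢ` and `0 < ν < ν₀`.
Then `G` is open and equals the interior of `F`. -/
theorem dense_convex_subset_eq_interior (m : ℕ)
    (F G : Set (Fin m → ℝ))
    (hFne : F.Nonempty) (hFclosed : IsClosed F) (hFconv : Convex ℝ F)
    (hFones : ∀ b ∈ F, ∀ lam : ℝ, b + lam • ((fun _ => 1) : Fin m → ℝ) ∈ F)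
    (hGF : G ⊆ F) (hGconv : Convex ℝ G)
    (hGdense : F ⊆ closure G)
    (hGones : ∀ b ∈ G, ∀ lam : ℝ, b + lam • ((fun _ => 1) : Fin m → ℝ) ∈ G)
    (hν : ∃ ν₀ > (0 : ℝ), ∀ b ∈ G, ∀ i : Fin m, ∀ ν : ℝ, 0 < ν → ν < ν₀ →
      b + ν • (Pi.single i 1 : Fin m → ℝ) ∈ G) :
    IsOpen G ∧ G = interior F :=
  dense_convex_subset_eq_interior_general m F G hGF hGconv hGdense hGones hν
end
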